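/- Every congenial finite ordered semigroup S satisfies the following condition: for all s, t ∈ S, either s ≤ (s·t)^ω · s or t ≤ t · (s·t)^ω. -/

import Mathlib

/-!
Common definitions for formalizing "Well Quasi-Orders Arising from Finite
Ordered Semigroups" (Klíma, Kolegar).

Words over an alphabet `A` are modelled as `List A`; nonempty words are often
given as a head letter together with the tail list.
-/

/-- The product `σ(a)·σ(b₁)⋯σ(bₖ)` of the nonempty word `a :: w`
(where `w = [b₁,…,bₖ]`) under the multiplicative extension of `σ`. -/
def wordProd {A S : Type} [Semigroup S] (σ : A → S) (a : A) (w : List A) : S :=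
  w.foldl (fun s b => s * σ b) (σ a)

/-- The relation `u ≤σ v` on finite words: there are factorizations
`u = a₁…aₙ` into letters and `v = v₁…vₙ` into nonempty words with
`σ(aᵢ) ≤ σ(vᵢ)` for all `i`.  The order on `S` is passed explicitly
as a relation `le`. -/
inductive LeSigma {A S : Type} [Semigroup S] (le : S → S → Prop) (σ : A → S) :
    List A → List A → Prop
  | nil : LeSigma le σ [] []
  | cons {a b : A} {v u w : List A} :
      le (σ a) (wordProd σ b v) → LeSigma le σ u w →
      LeSigma le σ (a :: u) (b :: (v ++ w))

/-- A relation on finite words is a well quasi-order if every infinite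
sequence of words has indices `i < j` with the `i`-th word below the `j`-th. -/
def IsWqo {A : Type} (r : List A → List A → Prop) : Prop :=
  ∀ f : ℕ → List A, ∃ i j : ℕ, i < j ∧ r (f i) (f j)

/-- A finite ordered semigroup `S` (with order relation `le`) is congenial if
for every finite alphabet `A` and every map `σ : A → S` the relation `≤σ`
is a well quasi-order. -/
def Congenial (S : Type) [Semigroup S] (le : S → S → Prop) : Prop :=
  ∀ (A : Type) [Fintype A] (σ : A → S), IsWqo (LeSigma le σ)

/-- Stability of an order relation on a semigroup: it is compatible with
multiplication on both sides. -/
def Stable {S : Type} [Semigroup S] (le : S → S → Prop) : Prop :=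
  ∀ x y s : S, le x y → le (s * x) (s * y) ∧ le (x * s) (y * s)

/-- `sPow s n = s^(n+1)`: the `(n+1)`-st power of `s` in a semigroup. -/
def sPow {S : Type} [Semigroup S] (s : S) : ℕ → S
  | 0 => s
  | n + 1 => sPow s n * s

/-- `e` is the idempotent positive power `s^ω` of `s`: it is a positive power
of `s` and it is idempotent.  (In a finite semigroup such an `e` exists and
is unique.) -/
def IsIdemPow {S : Type} [Semigroup S] (s e : S) : Prop :=
  (∃ n : ℕ, e = sPow s n) ∧ e * e = e

/-- `seqProd s i k` is the product `s i * s (i+1) * ⋯ * s (i+k)`. -/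
def seqProd {S : Type} [Semigroup S] (s : ℕ → S) (i : ℕ) : ℕ → S
  | 0 => s i
  | k + 1 => seqProd s i k * s (i + k + 1)

/-- The (finite, nonempty) word `v` is a factor `w(i)w(i+1)…w(j)` of the
infinite word `w : ℕ → A`. -/
def FactorOf {A : Type} (v : List A) (w : ℕ → A) : Prop :=
  ∃ i n : ℕ, v = (List.range (n + 1)).map fun k => w (i + k)

/-- A set `L` of (nonempty) finite words over `A` is unavoidable if every
infinite word over `A` has a finite factor belonging to `L`. -/
def Unavoidable {A : Type} (L : Set (List A)) : Prop :=
  ∀ w : ℕ → A, ∃ v ∈ L, FactorOf v w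

/-- `listPow u p` is the concatenation of `p` copies of the word `u`. -/
def listPow {A : Type} (u : List A) : ℕ → List A
  | 0 => []
  | n + 1 => u ++ listPow u n

/-- The product of a nonempty list of semigroup elements. -/
def neProd {S : Type} [Semigroup S] : (l : List S) → l ≠ [] → S
  | [], h => absurd rfl h
  | a :: t, _ => wordProd id a t

/-- The periodic infinite word `u^∞ = uuu…` determined by a nonempty
finite word `u`. -/
def periodicWord {A : Type} (u : List A) (h : u ≠ []) : ℕ → A :=
  fun n => u.get ⟨n % u.length, Nat.mod_lt _ (List.length_pos_of_ne_nil h)⟩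

/-- An ideal of a semigroup: a nonempty subset closed under multiplication by
arbitrary elements on both sides. -/
def IsIdeal {S : Type} [Mul S] (I : Set S) : Prop :=
  I.Nonempty ∧ ∀ t ∈ I, ∀ s : S, t * s ∈ I ∧ s * t ∈ I


/-! ### Auxiliary material for the proof of `stmt_4` -/

namespace Stmt4Aux

section EqLemmas

variable {S : Type} [Semigroup S]

theorem sPow_add (x : S) (i j : ℕ) : sPow x (i + j + 1) = sPow x i * sPow x j := by
  induction j with
  | zero => rfl
  | succ j ih =>
    show sPow x (i + j + 1 + 1) = _
    rw [show sPow x (i + j + 1 + 1) = sPow x (i + j + 1) * x from rfl, ih,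
      show sPow x (j + 1) = sPow x j * x from rfl, mul_assoc]

theorem sPow_succ_left (x : S) (k : ℕ) : sPow x (k + 1) = x * sPow x k := by
  have := sPow_add x 0 k
  simpa [show sPow x 0 = x from rfl] using this

theorem sPow_sPow (x : S) (i j : ℕ) : sPow (sPow x i) j = sPow x (i * j + i + j) := by
  induction j with
  | zero => simp [sPow]
  | succ j ih =>
    show sPow (sPow x i) j * sPow x i = _
    rw [ih, ← sPow_add]
    congr 1
    ring

theorem comm_sd (s t : S) (k : ℕ) : s * sPow (t * s) k = sPow (s * t) k * s := by
  induction k with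
  | zero => simp [sPow, mul_assoc]
  | succ k ih =>
    calc s * sPow (t * s) (k + 1) = s * (sPow (t * s) k * (t * s)) := rfl
    _ = (s * sPow (t * s) k) * (t * s) := (mul_assoc _ _ _).symm
    _ = (sPow (s * t) k * s) * (t * s) := by rw [ih]
    _ = (sPow (s * t) k * (s * t)) * s := by simp only [mul_assoc]
    _ = sPow (s * t) (k + 1) * s := rfl

theorem comm_dt (s t : S) (k : ℕ) : sPow (t * s) k * t = t * sPow (s * t) k := by
  induction k with
  | zero => simp [sPow, mul_assoc]
  | succ k ih =>
    calc sPow (t * s) (k + 1) * t = (sPow (t * s) k * (t * s)) * t := rfl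
    _ = (sPow (t * s) k * t) * (s * t) := by simp only [mul_assoc]
    _ = (t * sPow (s * t) k) * (s * t) := by rw [ih]
    _ = t * (sPow (s * t) k * (s * t)) := mul_assoc _ _ _
    _ = t * sPow (s * t) (k + 1) := rfl

theorem sPow_idem {c e : S} {n : ℕ} (hen : e = sPow c n) (hee : e * e = e) :
    ∀ M : ℕ, sPow c (M * (n + 1) + n) = e := by
  intro M
  induction M with
  | zero => simpa using hen.symm
  | succ M ih =>
    have hidx : (M + 1) * (n + 1) + n = (M * (n + 1) + n) + n + 1 := by ring
    rw [hidx, sPow_add, ih, ← hen, hee]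

end EqLemmas

section OrderLemmas

variable {S : Type} [Semigroup S] [PartialOrder S]
variable (hst : Stable ((· ≤ ·) : S → S → Prop))
include hst

theorem mulL {x y : S} (h : x ≤ y) (z : S) : z * x ≤ z * y := (hst x y z h).1

theorem mulR {x y : S} (h : x ≤ y) (z : S) : x * z ≤ y * z := (hst x y z h).2

theorem pow_le {x y : S} (h : x ≤ y) : ∀ k, sPow x k ≤ sPow y k := by
  intro k
  induction k with
  | zero => exact h
  | succ k ih =>
    calc sPow x (k + 1) = sPow x k * x := rfl
    _ ≤ sPow y k * x := mulR hst ih x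
    _ ≤ sPow y k * y := mulL hst h _
    _ = sPow y (k + 1) := rfl

theorem pumpL {x w : S} (h : x ≤ w * x) : ∀ R, x ≤ sPow w R * x := by
  intro R
  induction R with
  | zero => exact h
  | succ R ih =>
    calc x ≤ w * x := h
    _ ≤ w * (sPow w R * x) := mulL hst ih w
    _ = (w * sPow w R) * x := by rw [mul_assoc]
    _ = sPow w (R + 1) * x := by rw [← sPow_succ_left]

theorem pumpR {x w : S} (h : x ≤ x * w) : ∀ R, x ≤ x * sPow w R := by
  intro R
  induction R with
  | zero => exact h
  | succ R ih =>
    calc x ≤ x * w := h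
    _ ≤ (x * sPow w R) * w := mulR hst ih w
    _ = x * (sPow w R * w) := by rw [mul_assoc]
    _ = x * sPow w (R + 1) := rfl

theorem iterL {x : S} {K : ℕ} (hA : x ≤ sPow x (K + 1)) :
    ∀ j, x ≤ sPow x (j * (K + 1) + K) * x := by
  intro j
  induction j with
  | zero => simpa [sPow] using hA
  | succ j ih =>
    have h1 : x ≤ sPow x K * x := by
      simpa [show sPow x (K + 1) = sPow x K * x from rfl] using hA
    calc x ≤ sPow x K * x := h1
    _ ≤ sPow x K * (sPow x (j * (K + 1) + K) * x) := mulL hst ih _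
    _ = (sPow x K * sPow x (j * (K + 1) + K)) * x := by rw [mul_assoc]
    _ = sPow x (K + (j * (K + 1) + K) + 1) * x := by rw [← sPow_add]
    _ = sPow x ((j + 1) * (K + 1) + K) * x := by
        congr 2
        ring

theorem iterR {x : S} {K : ℕ} (hA : x ≤ sPow x (K + 1)) :
    ∀ j, x ≤ x * sPow x (j * (K + 1) + K) := by
  intro j
  induction j with
  | zero =>
    simpa [sPow_succ_left] using hA
  | succ j ih =>
    have h1 : x ≤ x * sPow x K := by
      simpa [sPow_succ_left x K] using hA
    calc x ≤ x * sPow x K := h1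
    _ ≤ (x * sPow x (j * (K + 1) + K)) * sPow x K := mulR hst ih _
    _ = x * (sPow x (j * (K + 1) + K) * sPow x K) := by rw [mul_assoc]
    _ = x * sPow x ((j * (K + 1) + K) + K + 1) := by rw [← sPow_add]
    _ = x * sPow x ((j + 1) * (K + 1) + K) := by
        congr 2
        ring

end OrderLemmas

section CaseLemmas

variable {S : Type} [Semigroup S] [PartialOrder S]
variable (hst : Stable ((· ≤ ·) : S → S → Prop))
variable {s t e : S} {n : ℕ}
include hst

theorem caseF1 (hen : e = sPow (s * t) n) (hee : e * e = e) {κ : ℕ}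
    (h : s ≤ sPow (s * t) κ * s) : s ≤ e * s := by
  have h1 := pumpL hst h n
  have h2 : sPow (sPow (s * t) κ) n = e := by
    rw [sPow_sPow]
    have hidx : κ * n + κ + n = κ * (n + 1) + n := by ring
    rw [hidx, sPow_idem hen hee]
  rwa [h2] at h1

theorem caseF2 (hen : e = sPow (s * t) n) (hee : e * e = e) {K κ : ℕ}
    (hA : s ≤ sPow s (K + 1)) (h : s ≤ sPow (s * t) κ) : s ≤ e * s := by
  set E := n * (K + 1) + K with hE
  have h1 : s ≤ sPow s E * s := iterL hst hA n
  have h2 : sPow s E ≤ sPow (sPow (s * t) κ) E := pow_le hst h E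
  have h3 : sPow (sPow (s * t) κ) E = e := by
    rw [sPow_sPow]
    have hidx : κ * E + κ + E = (κ * K + κ + K) * (n + 1) + n := by rw [hE]; ring
    rw [hidx, sPow_idem hen hee]
  calc s ≤ sPow s E * s := h1
  _ ≤ sPow (sPow (s * t) κ) E * s := mulR hst h2 s
  _ = e * s := by rw [h3]

theorem caseF3 (hen : e = sPow (s * t) n) (hee : e * e = e) {K κ : ℕ}
    (hA : s ≤ sPow s (K + 1)) (h : s ≤ sPow (t * s) κ) : s ≤ e * s := by
  set E := n * (K + 1) + K with hE
  have h1 : s ≤ s * sPow s E := iterR hst hA n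
  have h2 : sPow s E ≤ sPow (sPow (t * s) κ) E := pow_le hst h E
  have h3 : sPow (sPow (t * s) κ) E = sPow (t * s) (κ * E + κ + E) := sPow_sPow _ _ _
  have h4 : s * sPow (t * s) (κ * E + κ + E) = e * s := by
    rw [comm_sd]
    congr 1
    have hidx : κ * E + κ + E = (κ * K + κ + K) * (n + 1) + n := by rw [hE]; ring
    rw [hidx, sPow_idem hen hee]
  calc s ≤ s * sPow s E := h1
  _ ≤ s * sPow (sPow (t * s) κ) E := mulL hst h2 s
  _ = s * sPow (t * s) (κ * E + κ + E) := by rw [h3]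
  _ = e * s := h4

theorem caseF4 (hen : e = sPow (s * t) n) (hee : e * e = e) {K κ : ℕ}
    (hA : s ≤ sPow s (K + 1)) (h : s ≤ sPow (t * s) κ * t) : s ≤ e * s := by
  set L := n * (K + 1) + K with hL
  -- s·s ≤ (st)^(κ+1)
  have h2 : sPow s 1 ≤ sPow (s * t) (κ + 1) := by
    have : s * s ≤ s * (sPow (t * s) κ * t) := mulL hst h s
    calc sPow s 1 = s * s := by simp [sPow]
    _ ≤ s * (sPow (t * s) κ * t) := this
    _ = (s * sPow (t * s) κ) * t := by rw [mul_assoc]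
    _ = (sPow (s * t) κ * s) * t := by rw [comm_sd]
    _ = sPow (s * t) κ * (s * t) := by rw [mul_assoc]
    _ = sPow (s * t) (κ + 1) := rfl
  have h1 : s ≤ sPow s ((2 * n + 1) * (K + 1) + K) * s := iterL hst hA (2 * n + 1)
  have hidx1 : (2 * n + 1) * (K + 1) + K = 1 * L + 1 + L := by rw [hL]; ring
  have h5 : sPow s ((2 * n + 1) * (K + 1) + K) = sPow (sPow s 1) L := by
    rw [sPow_sPow, hidx1]
  have h6 : sPow (sPow s 1) L ≤ sPow (sPow (s * t) (κ + 1)) L := pow_le hst h2 L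
  have h7 : sPow (sPow (s * t) (κ + 1)) L = e := by
    rw [sPow_sPow]
    have hidx2 : (κ + 1) * L + (κ + 1) + L = (κ * K + κ + 2 * K + 1) * (n + 1) + n := by
      rw [hL]; ring
    rw [hidx2, sPow_idem hen hee]
  calc s ≤ sPow s ((2 * n + 1) * (K + 1) + K) * s := h1
  _ = sPow (sPow s 1) L * s := by rw [h5]
  _ ≤ sPow (sPow (s * t) (κ + 1)) L * s := mulR hst h6 s
  _ = e * s := by rw [h7]

theorem caseG4 (hen : e = sPow (s * t) n) (hee : e * e = e) {κ : ℕ}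
    (h : t ≤ sPow (t * s) κ * t) : t ≤ t * e := by
  have h' : t ≤ t * sPow (s * t) κ := by rwa [comm_dt] at h
  have h1 := pumpR hst h' n
  have h2 : sPow (sPow (s * t) κ) n = e := by
    rw [sPow_sPow]
    have hidx : κ * n + κ + n = κ * (n + 1) + n := by ring
    rw [hidx, sPow_idem hen hee]
  rwa [h2] at h1

theorem caseG2 (hen : e = sPow (s * t) n) (hee : e * e = e) {H κ : ℕ}
    (hB : t ≤ sPow t (H + 1)) (h : t ≤ sPow (s * t) κ) : t ≤ t * e := by
  set E := n * (H + 1) + H with hE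
  have h1 : t ≤ t * sPow t E := iterR hst hB n
  have h2 : sPow t E ≤ sPow (sPow (s * t) κ) E := pow_le hst h E
  have h3 : sPow (sPow (s * t) κ) E = e := by
    rw [sPow_sPow]
    have hidx : κ * E + κ + E = (κ * H + κ + H) * (n + 1) + n := by rw [hE]; ring
    rw [hidx, sPow_idem hen hee]
  calc t ≤ t * sPow t E := h1
  _ ≤ t * sPow (sPow (s * t) κ) E := mulL hst h2 t
  _ = t * e := by rw [h3]

theorem caseG3 (hen : e = sPow (s * t) n) (hee : e * e = e) {H κ : ℕ}
    (hB : t ≤ sPow t (H + 1)) (h : t ≤ sPow (t * s) κ) : t ≤ t * e := by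
  set E := n * (H + 1) + H with hE
  have h1 : t ≤ sPow t E * t := iterL hst hB n
  have h2 : sPow t E ≤ sPow (sPow (t * s) κ) E := pow_le hst h E
  have h3 : sPow (sPow (t * s) κ) E = sPow (t * s) (κ * E + κ + E) := sPow_sPow _ _ _
  have h4 : sPow (t * s) (κ * E + κ + E) * t = t * e := by
    rw [comm_dt]
    congr 1
    have hidx : κ * E + κ + E = (κ * H + κ + H) * (n + 1) + n := by rw [hE]; ring
    rw [hidx, sPow_idem hen hee]
  calc t ≤ sPow t E * t := h1
  _ ≤ sPow (sPow (t * s) κ) E * t := mulR hst h2 t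
  _ = sPow (t * s) (κ * E + κ + E) * t := by rw [h3]
  _ = t * e := h4

theorem caseG1 (hen : e = sPow (s * t) n) (hee : e * e = e) {H κ : ℕ}
    (hB : t ≤ sPow t (H + 1)) (h : t ≤ sPow (s * t) κ * s) : t ≤ t * e := by
  set L := n * (H + 1) + H with hL
  have h2 : sPow t 1 ≤ sPow (t * s) (κ + 1) := by
    have : t * t ≤ t * (sPow (s * t) κ * s) := mulL hst h t
    calc sPow t 1 = t * t := by simp [sPow]
    _ ≤ t * (sPow (s * t) κ * s) := this
    _ = (t * sPow (s * t) κ) * s := by rw [mul_assoc]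
    _ = (sPow (t * s) κ * t) * s := by rw [comm_dt]
    _ = sPow (t * s) κ * (t * s) := by rw [mul_assoc]
    _ = sPow (t * s) (κ + 1) := rfl
  have h1 : t ≤ sPow t ((2 * n + 1) * (H + 1) + H) * t := iterL hst hB (2 * n + 1)
  have hidx1 : (2 * n + 1) * (H + 1) + H = 1 * L + 1 + L := by rw [hL]; ring
  have h5 : sPow t ((2 * n + 1) * (H + 1) + H) = sPow (sPow t 1) L := by
    rw [sPow_sPow, hidx1]
  have h6 : sPow (sPow t 1) L ≤ sPow (sPow (t * s) (κ + 1)) L := pow_le hst h2 L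
  have h7 : sPow (sPow (t * s) (κ + 1)) L * t = t * e := by
    rw [sPow_sPow, comm_dt]
    congr 1
    have hidx2 : (κ + 1) * L + (κ + 1) + L = (κ * H + κ + 2 * H + 1) * (n + 1) + n := by
      rw [hL]; ring
    rw [hidx2, sPow_idem hen hee]
  calc t ≤ sPow t ((2 * n + 1) * (H + 1) + H) * t := h1
  _ = sPow (sPow t 1) L * t := by rw [h5]
  _ ≤ sPow (sPow (t * s) (κ + 1)) L * t := mulR hst h6 t
  _ = t * e := h7

end CaseLemmas

section WordLemmas

variable {A S : Type} [Semigroup S]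

theorem foldl_mul (σ : A → S) :
    ∀ (tl : List A) (a c : S),
      List.foldl (fun p y => p * σ y) (a * c) tl =
        a * List.foldl (fun p y => p * σ y) c tl := by
  intro tl
  induction tl with
  | nil => intro a c; rfl
  | cons y tl ih =>
    intro a c
    show List.foldl (fun p y => p * σ y) ((a * c) * σ y) tl = _
    rw [mul_assoc, ih]
    rfl

theorem wordProd_cons (σ : A → S) (h x : A) (tl : List A) :
    wordProd σ h (x :: tl) = σ h * wordProd σ x tl := by
  show List.foldl (fun p y => p * σ y) (σ h * σ x) tl = σ h * wordProd σ x tl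
  rw [foldl_mul]
  rfl

/-- Any `LeSigma`-relation between words of different lengths exhibits a
letter dominated by the product of a contiguous factor of length at least 2. -/
theorem extract_piece {le : S → S → Prop} {σ : A → S} :
    ∀ {u w : List A}, LeSigma le σ u w → u.length < w.length →
      ∃ (a b : A) (v x z : List A),
        w = x ++ (b :: v) ++ z ∧ v ≠ [] ∧ le (σ a) (wordProd σ b v) := by
  intro u w h
  induction h with
  | nil => intro h; simp at h
  | @cons a b v u w h1 h2 ih =>
    intro hlen
    by_cases hv : v = []
    · subst hv
      simp only [List.nil_append, List.length_cons] at hlen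
      obtain ⟨a', b', v', x', z', heq, hne, hle⟩ := ih (by omega)
      exact ⟨a', b', v', b :: x', z', by simp [heq], hne, hle⟩
    · exact ⟨a, b, v, [], w, by simp, hv, h1⟩

end WordLemmas

/-- Alternating list of given length starting with a given boolean. -/
def altList : Bool → ℕ → List Bool
  | _, 0 => []
  | q, (L + 1) => q :: altList (!q) L

theorem altList_length : ∀ (q : Bool) (L : ℕ), (altList q L).length = L := by
  intro q L
  induction L generalizing q with
  | zero => rfl
  | succ L ih => simp [altList, ih]

theorem listPow_eq_altList : ∀ p : ℕ, listPow [true, false] p = altList true (2 * p) := by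
  intro p
  induction p with
  | zero => rfl
  | succ p ih =>
    show [true, false] ++ listPow [true, false] p = altList true (2 * (p + 1))
    rw [ih, show 2 * (p + 1) = (2 * p) + 1 + 1 by ring]
    rfl

theorem altList_prefix :
    ∀ (y z : List Bool) (r : Bool) (L : ℕ), y ++ z = altList r L →
      y = altList r y.length := by
  intro y
  induction y with
  | nil => intro z r L _; rfl
  | cons c y ih =>
    intro z r L h
    cases L with
    | zero => simp [altList] at h
    | succ L =>
      simp only [altList, List.cons_append, List.cons.injEq] at h
      obtain ⟨rfl, h2⟩ := h
      rw [List.length_cons]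
      show c :: y = c :: altList (!c) y.length
      exact congrArg (fun l => c :: l) (ih z _ L h2)

theorem altList_suffix :
    ∀ (x rest : List Bool) (q : Bool) (L : ℕ), x ++ rest = altList q L →
      ∃ (r : Bool) (L' : ℕ), rest = altList r L' := by
  intro x
  induction x with
  | nil => intro rest q L h; exact ⟨q, L, by simpa using h⟩
  | cons c x ih =>
    intro rest q L h
    cases L with
    | zero => simp [altList] at h
    | succ L =>
      simp only [altList, List.cons_append, List.cons.injEq] at h
      exact ih rest (!q) L h.2

theorem altList_middle {x y z : List Bool} {q : Bool} {L : ℕ}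
    (h : x ++ y ++ z = altList q L) : ∃ r : Bool, y = altList r y.length := by
  rw [List.append_assoc] at h
  obtain ⟨r, L', h2⟩ := altList_suffix x (y ++ z) q L h
  exact ⟨r, altList_prefix y z r L' h2⟩

/-- Products of alternating words. -/
theorem altVal {S : Type} [Semigroup S] (σ : Bool → S) :
    ∀ (κ : ℕ) (b : Bool),
      wordProd σ b (altList (!b) (2 * κ + 1)) = sPow (σ b * σ (!b)) κ ∧
      wordProd σ b (altList (!b) (2 * κ + 2)) = sPow (σ b * σ (!b)) κ * σ b := by
  intro κ
  induction κ with
  | zero =>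
    intro b
    constructor
    · show wordProd σ b [!b] = _
      simp [wordProd, sPow]
    · show wordProd σ b [!b, !(!b)] = _
      simp [wordProd, sPow, Bool.not_not]
  | succ κ ih =>
    intro b
    have key : altList (!b) (2 * (κ + 1) + 1) = (!b) :: b :: altList (!b) (2 * κ + 1) := by
      show altList (!b) (2 * κ + 1 + 1 + 1) = _
      simp [altList, Bool.not_not]
    have key2 : altList (!b) (2 * (κ + 1) + 2) = (!b) :: b :: altList (!b) (2 * κ + 2) := by
      show altList (!b) (2 * κ + 2 + 1 + 1) = _
      simp [altList, Bool.not_not]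
    obtain ⟨ih1, ih2⟩ := ih b
    have step : σ b * σ (!b) * sPow (σ b * σ (!b)) κ = sPow (σ b * σ (!b)) (κ + 1) :=
      (sPow_succ_left _ _).symm
    constructor
    · rw [key, wordProd_cons, wordProd_cons, ih1, ← mul_assoc, step]
    · rw [key2, wordProd_cons, wordProd_cons, ih2, ← mul_assoc, ← mul_assoc, step]

end Stmt4Aux

open Stmt4Aux in
/-- From congeniality, applied to a one-letter alphabet: every `x` satisfies
`x ≤ x^(K+2)` for some `K`. -/
theorem single_fact {S : Type} [Semigroup S] [PartialOrder S]
    (hC : Congenial S (· ≤ ·)) (x : S) : ∃ K : ℕ, x ≤ sPow x (K + 1) := by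
  obtain ⟨i, j, hij, hrel⟩ := hC Unit (fun _ => x) (fun n => List.replicate (n + 1) ())
  have hlen : (List.replicate (i + 1) ()).length < (List.replicate (j + 1) ()).length := by
    simp [List.length_replicate]; omega
  obtain ⟨a, b, v, xx, zz, heq, hne, hle⟩ := extract_piece hrel hlen
  have hval : ∀ (v : List Unit) (b : Unit), wordProd (fun _ : Unit => x) b v = sPow x v.length := by
    intro v
    induction v with
    | nil => intro b; rfl
    | cons c v ih =>
      intro b
      rw [wordProd_cons, ih c]
      show x * sPow x v.length = _
      rw [← sPow_succ_left]
      rfl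
  rw [hval v b] at hle
  cases v with
  | nil => exact absurd rfl hne
  | cons c v' => exact ⟨v'.length, hle⟩

open Stmt4Aux in
/-- From congeniality, applied to the alternating word `(ab)^∞` with
`σ(a) = s`, `σ(b) = t`: one of eight domination relations holds. -/
theorem alt_fact {S : Type} [Semigroup S] [PartialOrder S]
    (hC : Congenial S (· ≤ ·)) (s t : S) :
    ∃ κ : ℕ,
      s ≤ sPow (s * t) κ ∨ s ≤ sPow (s * t) κ * s ∨
      s ≤ sPow (t * s) κ ∨ s ≤ sPow (t * s) κ * t ∨
      t ≤ sPow (s * t) κ ∨ t ≤ sPow (s * t) κ * s ∨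
      t ≤ sPow (t * s) κ ∨ t ≤ sPow (t * s) κ * t := by
  set σ : Bool → S := fun b => cond b s t with hσ
  obtain ⟨i, j, hij, hrel⟩ := hC Bool σ (fun n => listPow [true, false] (n + 1))
  have hlen : (listPow [true, false] (i + 1)).length < (listPow [true, false] (j + 1)).length := by
    rw [listPow_eq_altList, listPow_eq_altList, altList_length, altList_length]
    omega
  obtain ⟨a, b, v, xx, zz, heq, hne, hle⟩ := extract_piece hrel hlen
  -- the factor b :: v is an alternating word
  have heq' : xx ++ (b :: v) ++ zz = altList true (2 * (j + 1)) := by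
    rw [← listPow_eq_altList]; exact heq.symm
  obtain ⟨r, hbv⟩ := altList_middle heq'
  rw [List.length_cons] at hbv
  have hbr : b = r ∧ v = altList (!r) v.length := by
    rw [show altList r (v.length + 1) = r :: altList (!r) v.length from rfl] at hbv
    exact ⟨(List.cons.injEq _ _ _ _ ▸ hbv).1, (List.cons.injEq _ _ _ _ ▸ hbv).2⟩
  obtain ⟨rfl, hv⟩ := hbr
  -- parity of v.length
  have hpos : 1 ≤ v.length := by
    cases v with
    | nil => exact absurd rfl hne
    | cons _ _ => simp
  rcases Nat.even_or_odd v.length with hpar | hpar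
  · -- even: v.length = 2κ + 2
    obtain ⟨c, hc⟩ := hpar
    have hc2 : ∃ κ, v.length = 2 * κ + 2 := by
      refine ⟨c - 1, ?_⟩
      omega
    obtain ⟨κ, hκ⟩ := hc2
    have hval : wordProd σ b v = sPow (σ b * σ (!b)) κ * σ b := by
      rw [hv, hκ]
      exact (altVal σ κ b).2
    rw [hval] at hle
    refine ⟨κ, ?_⟩
    cases a <;> cases b <;> simp only [hσ, cond_true, cond_false, Bool.not_true,
      Bool.not_false] at hle
    · right; right; right; right; right; right; right; exact hle
    · right; right; right; right; right; left; exact hle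
    · right; right; right; left; exact hle
    · right; left; exact hle
  · -- odd: v.length = 2κ + 1
    obtain ⟨κ, hκ⟩ := hpar
    have hval : wordProd σ b v = sPow (σ b * σ (!b)) κ := by
      rw [hv, hκ]
      exact (altVal σ κ b).1
    rw [hval] at hle
    refine ⟨κ, ?_⟩
    cases a <;> cases b <;> simp only [hσ, cond_true, cond_false, Bool.not_true,
      Bool.not_false] at hle
    · right; right; right; right; right; right; left; exact hle
    · right; right; right; right; left; exact hle
    · right; right; left; exact hle
    · left; exact hle


/-- every congenial finite ordered semigroup satisfies
`s ≤ (s·t)^ω·s` or `t ≤ t·(s·t)^ω` for all `s, t`. -/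
theorem stmt_4 {S : Type} [Fintype S] [Semigroup S] [PartialOrder S]
    (hst : Stable ((· ≤ ·) : S → S → Prop))
    (hC : Congenial S (· ≤ ·)) :
    ∀ s t e : S, IsIdemPow (s * t) e → (s ≤ e * s ∨ t ≤ t * e) := by
  intro s t e hIP
  obtain ⟨⟨n, hen⟩, hee⟩ := hIP
  by_contra hcon
  push_neg at hcon
  obtain ⟨hN1, hN2⟩ := hcon
  obtain ⟨K, hA⟩ := single_fact hC s
  obtain ⟨H, hB⟩ := single_fact hC t
  obtain ⟨κ, hcase⟩ := alt_fact hC s t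
  rcases hcase with h | h | h | h | h | h | h | h
  · exact hN1 (Stmt4Aux.caseF2 hst hen hee hA h)
  · exact hN1 (Stmt4Aux.caseF1 hst hen hee h)
  · exact hN1 (Stmt4Aux.caseF3 hst hen hee hA h)
  · exact hN1 (Stmt4Aux.caseF4 hst hen hee hA h)
  · exact hN2 (Stmt4Aux.caseG2 hst hen hee hB h)
  · exact hN2 (Stmt4Aux.caseG1 hst hen hee hB h)
  · exact hN2 (Stmt4Aux.caseG3 hst hen hee hB h)
  · exact hN2 (Stmt4Aux.caseG4 hst hen hee h)
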